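/- Let U ∈ ℝ^{(k+p)×k} have full column rank k, let Π_{I_*}^T Q_C have full column rank where C = Q_C R_C is a thin QR factorization with U = Π_{I_*}^T C, and let ε > 0. Then for any perturbations ΔC, ΔU: (C + ΔC)(U + ΔU)_ε^† U = C + E_*, where ‖E_*‖₂ ≤ ‖(Π_{I_*}^T Q_C)^†‖₂ (ε + 2‖ΔU‖₂ + ‖ΔU‖₂²/ε) + ‖ΔC‖₂ (1 + ‖ΔU‖₂/ε). -/

import Mathlib

/-! Put `B = U + ΔU`, `P = B_ε^†` and `G = (Π_{I*}ᵀ Q_C)^†`. Full column rank of `Π_{I*}ᵀ Q_C`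
gives `G Π_{I*}ᵀ Q_C = 1`, hence `C = Q_C R_C = Q_C G U` and
`(C + ΔC) P U - C = Q_C G (U P U - U) + ΔC P U`. The SVD of `B` yields `‖B P B - B‖ ≤ ε`,
`‖B P‖, ‖P B‖, ‖1 - P B‖ ≤ 1` and `‖P‖ ≤ 1/ε`; substituting `U = B - ΔU` then gives
`‖U P U - U‖ ≤ ε + 2‖ΔU‖ + ‖ΔU‖²/ε` and `‖P U‖ ≤ 1 + ‖ΔU‖/ε`, while `‖Q_C‖ ≤ 1`. -/

open Matrix

noncomputable section

/-- `B` is the Moore–Penrose pseudoinverse of `A` (the four Penrose conditions). -/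
def IsMP {m n : ℕ} (A : Matrix (Fin m) (Fin n) ℝ) (B : Matrix (Fin n) (Fin m) ℝ) : Prop :=
  A * B * A = A ∧ B * A * B = B ∧ (A * B)ᵀ = A * B ∧ (B * A)ᵀ = B * A

/-- Euclidean norm of a vector. -/
def eucNorm {a : ℕ} (v : Fin a → ℝ) : ℝ := Real.sqrt (∑ i, (v i) ^ 2)

/-- Spectral (ℓ2 operator) norm of a matrix. -/
def spec {a b : ℕ} (M : Matrix (Fin a) (Fin b) ℝ) : ℝ :=
  sSup {r | ∃ x : Fin b → ℝ, eucNorm x = 1 ∧ r = eucNorm (M.mulVec x)}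

/-- Selection matrix whose columns are the columns of the identity indexed by `g`. -/
def sel {a b : ℕ} (g : Fin a → Fin b) : Matrix (Fin b) (Fin a) ℝ :=
  fun i j => if g j = i then 1 else 0

open scoped Matrix.Norms.L2Operator

lemma eucNorm_eq_norm {a : ℕ} (v : Fin a → ℝ) : eucNorm v = ‖WithLp.toLp 2 v‖ := by
  simp [eucNorm, EuclideanSpace.norm_eq]

lemma spec_eq_l2_opNorm {a b : ℕ} (M : Matrix (Fin a) (Fin b) ℝ) : spec M = ‖M‖ := by
  rw [Matrix.l2_opNorm_def, ← ContinuousLinearMap.sSup_sphere_eq_norm, spec]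
  congr 1
  ext r
  constructor
  · rintro ⟨x, hx, rfl⟩
    exact ⟨WithLp.toLp 2 x, by simpa [eucNorm_eq_norm] using hx, (eucNorm_eq_norm _).symm⟩
  · rintro ⟨x, hx, rfl⟩
    exact ⟨x.ofLp, by simpa [eucNorm_eq_norm] using hx, (eucNorm_eq_norm _).symm⟩

namespace Matrix

lemma mul_diagonal_mul_transpose_mul_mul_diagonal_mul {R k l m n : Type*} [Semiring R]
    [Fintype m] [Fintype n] [DecidableEq n] (X : Matrix l n R) (Y : Matrix m n R)
    (Z : Matrix k n R) (a b : n → R) (hY : Yᵀ * Y = 1) :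
    X * diagonal a * Yᵀ * (Y * diagonal b * Zᵀ) = X * diagonal (a * b) * Zᵀ := by
  simp only [Matrix.mul_assoc]
  rw [← Matrix.mul_assoc Yᵀ, hY, Matrix.one_mul, ← Matrix.mul_assoc (diagonal a),
    diagonal_mul_diagonal]
  rfl

lemma mul_eq_one_of_mul_mul_self_eq_self_of_rank_eq {K m n : Type*} [Field K] [Fintype m]
    [Fintype n] [DecidableEq n] {A : Matrix m n K} {G : Matrix n m K}
    (hAGA : A * G * A = A) (hA : A.rank = Fintype.card n) : G * A = 1 := by
  have hker : Module.finrank K (LinearMap.ker A.mulVecLin) = 0 := by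
    have := LinearMap.finrank_range_add_finrank_ker A.mulVecLin
    rw [Module.finrank_fintype_fun_eq_card] at this
    change A.rank + _ = _ at this
    omega
  have hinj : Function.Injective A.mulVecLin :=
    LinearMap.ker_eq_bot.mp (Submodule.finrank_eq_zero.mp hker)
  refine toLin'.injective (LinearMap.ext fun v => hinj ?_)
  simp only [toLin'_apply, toLin'_one, LinearMap.id_apply, mulVecLin_apply, mulVec_mulVec,
    ← Matrix.mul_assoc, hAGA]

variable {l m n : Type*} [Fintype l] [Fintype m] [Fintype n] [DecidableEq n]

lemma l2_opNorm_transpose [DecidableEq m] (A : Matrix m n ℝ) : ‖Aᵀ‖ = ‖A‖ :=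
  l2_opNorm_conjTranspose A

lemma l2_opNorm_one_le : ‖(1 : Matrix n n ℝ)‖ ≤ 1 := by
  rw [← diagonal_one, l2_opNorm_diagonal]
  exact pi_norm_le_iff_of_nonneg zero_le_one |>.mpr fun _ => by simp

lemma l2_opNorm_le_one_of_transpose_mul_self_eq_one {A : Matrix m n ℝ} (hA : Aᵀ * A = 1) :
    ‖A‖ ≤ 1 := by
  have h : ‖A‖ * ‖A‖ ≤ 1 := by
    rw [← l2_opNorm_conjTranspose_mul_self, conjTranspose_eq_transpose_of_trivial, hA]
    exact l2_opNorm_one_le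
  nlinarith [norm_nonneg A]

lemma l2_opNorm_mul_diagonal_mul_le [DecidableEq m] {X : Matrix l n ℝ} {Y : Matrix n m ℝ}
    (hX : ‖X‖ ≤ 1) (hY : ‖Y‖ ≤ 1) {d : n → ℝ} {r : ℝ} (hr : 0 ≤ r) (hd : ∀ i, |d i| ≤ r) :
    ‖X * diagonal d * Y‖ ≤ r := by
  have hD : ‖(diagonal d : Matrix n n ℝ)‖ ≤ r := by
    rw [l2_opNorm_diagonal]
    exact pi_norm_le_iff_of_nonneg hr |>.mpr hd
  calc ‖X * diagonal d * Y‖ ≤ ‖X‖ * ‖(diagonal d : Matrix n n ℝ)‖ * ‖Y‖ :=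
        (l2_opNorm_mul _ _).trans (by gcongr; exact l2_opNorm_mul _ _)
    _ ≤ 1 * r * 1 := by gcongr
    _ = r := by ring

end Matrix

def truncInv (ε s : ℝ) : ℝ := if ε ≤ s then s⁻¹ else 0

lemma mul_truncInv {ε : ℝ} (hε : 0 < ε) (s : ℝ) :
    s * truncInv ε s = if ε ≤ s then 1 else 0 := by
  unfold truncInv
  split_ifs with h
  · exact mul_inv_cancel₀ (hε.trans_le h).ne'
  · exact mul_zero s

lemma abs_truncInv_le {ε : ℝ} (hε : 0 < ε) (s : ℝ) : |truncInv ε s| ≤ ε⁻¹ := by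
  unfold truncInv
  split_ifs with h
  · rw [abs_of_pos (inv_pos.mpr (hε.trans_le h))]
    exact inv_anti₀ hε h
  · simpa using hε.le

lemma abs_mul_truncInv_mul_sub_le {ε s : ℝ} (hε : 0 ≤ ε) (hs : 0 ≤ s) :
    |s * truncInv ε s * s - s| ≤ ε := by
  unfold truncInv
  split_ifs with h
  · rw [mul_inv_mul_cancel, sub_self, abs_zero]
    exact hε
  · simpa [abs_of_nonneg hs] using (not_le.mp h).le

section TruncatedPseudoinverse

variable {m n : Type*} [Fintype m] [Fintype n] [DecidableEq m] [DecidableEq n]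

/-- `B_ε^† = V Σ₁⁻¹ W₁ᵀ` for the thin SVD `B = W * diagonal σ * Vᵀ`: only the singular values
`≥ ε` are inverted, the others are replaced by `0`. -/
def truncPinv (ε : ℝ) (W : Matrix m n ℝ) (σ : n → ℝ) (V : Matrix n n ℝ) : Matrix n m ℝ :=
  V * diagonal (fun i => truncInv ε (σ i)) * Wᵀ

structure TruncPinvEstimates (ε : ℝ) (B : Matrix m n ℝ) (P : Matrix n m ℝ) : Prop where
  norm_mul_pinv_mul_sub_le : ‖B * P * B - B‖ ≤ ε
  norm_mul_pinv_le_one : ‖B * P‖ ≤ 1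
  norm_pinv_mul_le_one : ‖P * B‖ ≤ 1
  norm_one_sub_pinv_mul_le_one : ‖1 - P * B‖ ≤ 1
  norm_pinv_le : ‖P‖ ≤ ε⁻¹

theorem truncPinvEstimates_of_svd {ε : ℝ} (hε : 0 < ε) {W : Matrix m n ℝ} {V : Matrix n n ℝ}
    {σ : n → ℝ} (hW : Wᵀ * W = 1) (hV : Vᵀ * V = 1) (hσ : ∀ i, 0 ≤ σ i) :
    TruncPinvEstimates ε (W * diagonal σ * Vᵀ) (truncPinv ε W σ V) := by
  set g : n → ℝ := fun i => truncInv ε (σ i)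
  have hWn : ‖W‖ ≤ 1 := l2_opNorm_le_one_of_transpose_mul_self_eq_one hW
  have hVn : ‖V‖ ≤ 1 := l2_opNorm_le_one_of_transpose_mul_self_eq_one hV
  have hWtn : ‖Wᵀ‖ ≤ 1 := (l2_opNorm_transpose W).trans_le hWn
  have hVtn : ‖Vᵀ‖ ≤ 1 := (l2_opNorm_transpose V).trans_le hVn
  have hσg (i : n) : σ i * g i = if ε ≤ σ i then 1 else 0 := mul_truncInv hε (σ i)
  have hBP : W * diagonal σ * Vᵀ * truncPinv ε W σ V = W * diagonal (σ * g) * Wᵀ :=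
    mul_diagonal_mul_transpose_mul_mul_diagonal_mul _ _ _ _ _ hV
  have hPB : truncPinv ε W σ V * (W * diagonal σ * Vᵀ) = V * diagonal (g * σ) * Vᵀ :=
    mul_diagonal_mul_transpose_mul_mul_diagonal_mul _ _ _ _ _ hW
  refine ⟨?_, ?_, ?_, ?_, ?_⟩
  · rw [hBP, mul_diagonal_mul_transpose_mul_mul_diagonal_mul _ _ _ _ _ hW, ← Matrix.sub_mul,
      ← Matrix.mul_sub, diagonal_sub]
    exact l2_opNorm_mul_diagonal_mul_le hWn hVtn hε.le
      fun i => abs_mul_truncInv_mul_sub_le hε.le (hσ i)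
  · rw [hBP]
    refine l2_opNorm_mul_diagonal_mul_le hWn hWtn zero_le_one fun i => ?_
    simp only [Pi.mul_apply, hσg]
    split_ifs <;> simp
  · rw [hPB]
    refine l2_opNorm_mul_diagonal_mul_le hVn hVtn zero_le_one fun i => ?_
    simp only [Pi.mul_apply, mul_comm (g i), hσg]
    split_ifs <;> simp
  · have hVVt : V * Vᵀ = 1 := mul_eq_one_comm.mp hV
    rw [hPB]
    nth_rewrite 1 [← hVVt, ← Matrix.mul_one V, ← diagonal_one]
    rw [← Matrix.sub_mul, ← Matrix.mul_sub, diagonal_sub]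
    refine l2_opNorm_mul_diagonal_mul_le hVn hVtn zero_le_one fun i => ?_
    simp only [Pi.mul_apply, mul_comm (g i), hσg]
    split_ifs <;> simp
  · exact l2_opNorm_mul_diagonal_mul_le hVn hWtn (inv_nonneg.mpr hε.le)
      fun i => abs_truncInv_le hε (σ i)

namespace TruncPinvEstimates

variable {ε : ℝ} {U ΔU : Matrix m n ℝ} {P : Matrix n m ℝ}

/-- With `B = U + ΔU`: `U P U - U = (B P B - B) - B P ΔU + ΔU (1 - P B) + ΔU P ΔU`. -/
theorem norm_mul_pinv_mul_sub_le_of_perturb (h : TruncPinvEstimates ε (U + ΔU) P) :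
    ‖U * P * U - U‖ ≤ ε + 2 * ‖ΔU‖ + ‖ΔU‖ ^ 2 / ε := by
  set B := U + ΔU
  have hU : U = B - ΔU := (add_sub_cancel_right U ΔU).symm
  have hdecomp : U * P * U - U = (B * P * B - B) - B * P * ΔU + ΔU * (1 - P * B)
      + ΔU * P * ΔU := by
    rw [hU]
    simp only [Matrix.sub_mul, Matrix.mul_sub, Matrix.mul_one, ← Matrix.mul_assoc]
    abel
  have hBPΔU : ‖B * P * ΔU‖ ≤ ‖ΔU‖ := calc
    ‖B * P * ΔU‖ ≤ ‖B * P‖ * ‖ΔU‖ := l2_opNorm_mul _ _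
    _ ≤ 1 * ‖ΔU‖ := by gcongr; exact h.norm_mul_pinv_le_one
    _ = ‖ΔU‖ := one_mul _
  have hΔUPB : ‖ΔU * (1 - P * B)‖ ≤ ‖ΔU‖ := calc
    ‖ΔU * (1 - P * B)‖ ≤ ‖ΔU‖ * ‖1 - P * B‖ := l2_opNorm_mul _ _
    _ ≤ ‖ΔU‖ * 1 := by gcongr; exact h.norm_one_sub_pinv_mul_le_one
    _ = ‖ΔU‖ := mul_one _
  have hΔUPΔU : ‖ΔU * P * ΔU‖ ≤ ‖ΔU‖ ^ 2 / ε := calc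
    ‖ΔU * P * ΔU‖ ≤ ‖ΔU‖ * ‖P‖ * ‖ΔU‖ :=
      (l2_opNorm_mul _ _).trans (by gcongr; exact l2_opNorm_mul _ _)
    _ ≤ ‖ΔU‖ * ε⁻¹ * ‖ΔU‖ := by gcongr; exact h.norm_pinv_le
    _ = ‖ΔU‖ ^ 2 / ε := by ring
  rw [hdecomp]
  calc _ ≤ ‖B * P * B - B - B * P * ΔU‖ + ‖ΔU * (1 - P * B)‖ + ‖ΔU * P * ΔU‖ := norm_add₃_le
    _ ≤ ‖B * P * B - B‖ + ‖B * P * ΔU‖ + ‖ΔU * (1 - P * B)‖ + ‖ΔU * P * ΔU‖ := by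
        gcongr
        exact norm_sub_le _ _
    _ ≤ ε + ‖ΔU‖ + ‖ΔU‖ + ‖ΔU‖ ^ 2 / ε := by
        gcongr
        exact h.norm_mul_pinv_mul_sub_le
    _ = ε + 2 * ‖ΔU‖ + ‖ΔU‖ ^ 2 / ε := by ring

theorem norm_pinv_mul_le_of_perturb (h : TruncPinvEstimates ε (U + ΔU) P) :
    ‖P * U‖ ≤ 1 + ‖ΔU‖ / ε := by
  have hPU : P * U = P * (U + ΔU) - P * ΔU := by rw [Matrix.mul_add, add_sub_cancel_right]
  calc ‖P * U‖ ≤ ‖P * (U + ΔU)‖ + ‖P‖ * ‖ΔU‖ :=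
        hPU ▸ (norm_sub_le _ _).trans (by gcongr; exact l2_opNorm_mul _ _)
    _ ≤ 1 + ε⁻¹ * ‖ΔU‖ := by
        gcongr
        · exact h.norm_pinv_mul_le_one
        · exact h.norm_pinv_le
    _ = 1 + ‖ΔU‖ / ε := by ring

end TruncPinvEstimates

end TruncatedPseudoinverse

theorem perturbed_trunc_pinv_projection_general {m k p : ℕ} (ε : ℝ) (hε : 0 < ε)
    (C QC : Matrix (Fin m) (Fin k) ℝ) (RC : Matrix (Fin k) (Fin k) ℝ)
    (hQR : C = QC * RC) (hQC : QCᵀ * QC = 1)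
    (f : Fin (k + p) → Fin m)
    (hQCrank : ((sel f)ᵀ * QC).rank = k)
    (G : Matrix (Fin k) (Fin (k + p)) ℝ) (hG : IsMP ((sel f)ᵀ * QC) G)
    (ΔC : Matrix (Fin m) (Fin k) ℝ) (ΔU : Matrix (Fin (k + p)) (Fin k) ℝ)
    -- thin SVD data of U + ΔU
    (W : Matrix (Fin (k + p)) (Fin k) ℝ) (V : Matrix (Fin k) (Fin k) ℝ) (σ : Fin k → ℝ)
    (hW : Wᵀ * W = 1) (hV : Vᵀ * V = 1) (hσ : ∀ i, 0 ≤ σ i)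
    (hUΔU : (sel f)ᵀ * C + ΔU = W * Matrix.diagonal σ * Vᵀ) :
    ∃ E : Matrix (Fin m) (Fin k) ℝ,
      (C + ΔC) * (V * Matrix.diagonal (fun i => if ε ≤ σ i then (σ i)⁻¹ else 0) * Wᵀ)
          * ((sel f)ᵀ * C) = C + E ∧
      spec E ≤ spec G * (ε + 2 * spec ΔU + spec ΔU ^ 2 / ε)
          + spec ΔC * (1 + spec ΔU / ε) := by
  set U := (sel f)ᵀ * C
  set P := truncPinv ε W σ V
  have hP : TruncPinvEstimates ε (U + ΔU) P := hUΔU ▸ truncPinvEstimates_of_svd hε hW hV hσ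
  have hGA : G * ((sel f)ᵀ * QC) = 1 :=
    mul_eq_one_of_mul_mul_self_eq_self_of_rank_eq hG.1 (by rw [hQCrank, Fintype.card_fin])
  have hC : C = QC * G * U := calc
    C = QC * (G * ((sel f)ᵀ * QC)) * RC := by rw [hGA, Matrix.mul_one, hQR]
    _ = QC * G * U := by simp only [U, hQR, Matrix.mul_assoc]
  refine ⟨QC * G * (U * P * U - U) + ΔC * (P * U), ?_, ?_⟩
  · change (C + ΔC) * P * U = _
    rw [hC]
    simp only [Matrix.mul_sub, Matrix.add_mul, Matrix.mul_assoc]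
    abel
  · simp only [spec_eq_l2_opNorm]
    have hQCG : ‖QC * G‖ ≤ ‖G‖ :=
      (l2_opNorm_mul _ _).trans (mul_le_of_le_one_left (norm_nonneg G)
        (l2_opNorm_le_one_of_transpose_mul_self_eq_one hQC))
    calc _ ≤ ‖QC * G‖ * ‖U * P * U - U‖ + ‖ΔC‖ * ‖P * U‖ :=
          (norm_add_le _ _).trans (add_le_add (l2_opNorm_mul _ _) (l2_opNorm_mul _ _))
      _ ≤ _ := by
          gcongr
          · exact hP.norm_mul_pinv_mul_sub_le_of_perturb
          · exact hP.norm_pinv_mul_le_of_perturb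

/-- Lemma 3.5: `(C + ΔC)(U + ΔU)_ε† U = C + E_*` with
`‖E_*‖₂ ≤ ‖(Π_{I_*}ᵀ Q_C)†‖₂ (ε + 2‖ΔU‖₂ + ‖ΔU‖₂²/ε) + ‖ΔC‖₂ (1 + ‖ΔU‖₂/ε)`,
where `U = Π_{I_*}ᵀ C` has full column rank and `C = Q_C R_C` is a thin QR factorization. -/
theorem perturbed_trunc_pinv_projection {m k p : ℕ} (ε : ℝ) (hε : 0 < ε)
    (C QC : Matrix (Fin m) (Fin k) ℝ) (RC : Matrix (Fin k) (Fin k) ℝ)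
    (hQR : C = QC * RC) (hQC : QCᵀ * QC = 1)
    (f : Fin (k + p) → Fin m) (hf : Function.Injective f)
    (hUrank : ((sel f)ᵀ * C).rank = k)
    (hQCrank : ((sel f)ᵀ * QC).rank = k)
    (G : Matrix (Fin k) (Fin (k + p)) ℝ) (hG : IsMP ((sel f)ᵀ * QC) G)
    (ΔC : Matrix (Fin m) (Fin k) ℝ) (ΔU : Matrix (Fin (k + p)) (Fin k) ℝ)
    -- thin SVD data of U + ΔU
    (W : Matrix (Fin (k + p)) (Fin k) ℝ) (V : Matrix (Fin k) (Fin k) ℝ) (σ : Fin k → ℝ)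
    (hW : Wᵀ * W = 1) (hV : Vᵀ * V = 1) (hV' : V * Vᵀ = 1) (hσ : ∀ i, 0 ≤ σ i)
    (hUΔU : (sel f)ᵀ * C + ΔU = W * Matrix.diagonal σ * Vᵀ) :
    ∃ E : Matrix (Fin m) (Fin k) ℝ,
      (C + ΔC) * (V * Matrix.diagonal (fun i => if ε ≤ σ i then (σ i)⁻¹ else 0) * Wᵀ)
          * ((sel f)ᵀ * C) = C + E ∧
      spec E ≤ spec G * (ε + 2 * spec ΔU + spec ΔU ^ 2 / ε)
          + spec ΔC * (1 + spec ΔU / ε) :=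
  perturbed_trunc_pinv_projection_general ε hε C QC RC hQR hQC f hQCrank G hG ΔC ΔU W V σ hW hV hσ
    hUΔU
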